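/- Let X be a càdlàg process on [0,T], A = σ(X_t : 0 ≤ t ≤ T), and (A^n) a sequence of sub-σ-algebras. Then A^n converges weakly to A if and only if for every k ∈ ℕ, every finite collection of times t_1,...,t_k in a dense subset D of [0,T] containing T, and every bounded continuous function f : ℝ^k → ℝ, the conditional expectations E(f(X_{t_1},...,X_{t_k}) | A^n) converge in probability to f(X_{t_1},...,X_{t_k}). -/

import Mathlib

open MeasureTheory Filter

/-- A function is càdlàg on `[0,T]`: right-continuous on `[0,T)` and with left limits
on `(0,T]`. -/
def IsCadlagOn (T : ℝ) (f : ℝ → ℝ) : Prop :=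
  (∀ t ∈ Set.Ico 0 T, Filter.Tendsto f (nhdsWithin t (Set.Ioi t)) (nhds (f t))) ∧
  (∀ t ∈ Set.Ioc 0 T, ∃ l : ℝ, Filter.Tendsto f (nhdsWithin t (Set.Iio t)) (nhds l))

/-- Weak convergence of a sequence of sub-σ-algebras `A n` to a σ-algebra `Alim`:
for every `B ∈ Alim`, `E(1_B | A n) → 1_B` in probability. -/
def WeakConvSigma {Ω : Type*} {mΩ : MeasurableSpace Ω} (μ : Measure Ω)
    (A : ℕ → MeasurableSpace Ω) (Alim : MeasurableSpace Ω) : Prop :=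
  ∀ B : Set Ω, MeasurableSet[Alim] B →
    TendstoInMeasure μ
      (fun n => μ[Set.indicator B (fun _ => (1 : ℝ)) | A n]) atTop
      (Set.indicator B (fun _ => (1 : ℝ)))

/-!
The integrable `g` with `E(g | A n) → g` in probability form a closed linear subspace of `L¹`:
conditional expectation is an `L¹` contraction, and Markov's inequality turns `L¹` errors into
errors in probability uniformly in `n`.

Forward direction: the subspace contains the indicators of the limit σ-algebra, hence all of its
integrable functions, among them `f(X_{t_1}, …, X_{t_k})`. Backward direction: bounded continuous
functions are dense in `L¹` of the law of `(X_{t_1}, …, X_{t_k})`, so the subspace contains the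
indicators of the finite-dimensional cylinders over `D`. These form a π-system and the sets whose
indicator lies in the subspace form a Dynkin system, so σ(X_d : d ∈ D) is reached; right-continuity
and `T ∈ D` make this σ-algebra equal to σ(X_t : 0 ≤ t ≤ T).
-/

open scoped ENNReal Topology BoundedContinuousFunction

section TendstoInMeasure

variable {ι Ω E : Type*} {mΩ : MeasurableSpace Ω} {μ : Measure Ω} {l : Filter ι}

theorem measure_add_le_dist_le {α : Type*} [PseudoMetricSpace α] (u v w : Ω → α) (ε₁ ε₂ : ℝ) :
    μ {x | ε₁ + ε₂ ≤ dist (u x) (w x)} ≤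
      μ {x | ε₁ ≤ dist (u x) (v x)} + μ {x | ε₂ ≤ dist (v x) (w x)} := by
  refine (measure_mono fun x hx => ?_).trans (measure_union_le _ _)
  by_contra! h
  simp only [Set.mem_union, Set.mem_ofPred_eq, not_or, not_le] at hx h
  linarith [dist_triangle (u x) (v x) (w x)]

theorem measure_le_dist_le_of_eLpNorm_le [SeminormedAddCommGroup E] {u v : Ω → E}
    (huv : AEStronglyMeasurable (u - v) μ) {ε : ℝ} (hε : 0 < ε) {δ : ℝ≥0∞}
    (h : eLpNorm (u - v) 1 μ ≤ δ * ENNReal.ofReal ε) :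
    μ {x | ε ≤ dist (u x) (v x)} ≤ δ := by
  have hε' : ENNReal.ofReal ε ≠ 0 := by simpa using hε
  have markov := mul_meas_ge_le_pow_eLpNorm' μ one_ne_zero ENNReal.one_ne_top huv
    (ENNReal.ofReal ε)
  simp only [ENNReal.toReal_one, ENNReal.rpow_one, Pi.sub_apply] at markov
  have hsub : {x | ε ≤ dist (u x) (v x)} ⊆ {x | ENNReal.ofReal ε ≤ ‖u x - v x‖ₑ} := fun x hx => by
    rwa [Set.mem_ofPred_eq, ← edist_eq_enorm_sub, edist_dist,
      ENNReal.ofReal_le_ofReal_iff dist_nonneg]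
  refine (ENNReal.mul_le_mul_iff_left hε' ENNReal.ofReal_ne_top).mp ?_
  calc μ {x | ε ≤ dist (u x) (v x)} * ENNReal.ofReal ε
      ≤ ENNReal.ofReal ε * μ {x | ENNReal.ofReal ε ≤ ‖u x - v x‖ₑ} := by
        rw [mul_comm]; gcongr
    _ ≤ δ * ENNReal.ofReal ε := markov.trans h

theorem tendstoInMeasure_const [PseudoMetricSpace E] (f : Ω → E) :
    TendstoInMeasure μ (fun _ : ι => f) l f := by
  rw [tendstoInMeasure_iff_dist]
  intro ε hε
  simpa [hε.not_ge] using tendsto_const_nhds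

namespace MeasureTheory.TendstoInMeasure

protected theorem const_smul [NormedAddCommGroup E] [NormedSpace ℝ E] {F : ι → Ω → E}
    {f : Ω → E} (c : ℝ) (hF : TendstoInMeasure μ F l f) :
    TendstoInMeasure μ (fun i => c • F i) l (c • f) := by
  rcases eq_or_ne c 0 with rfl | hc
  · simpa only [zero_smul] using tendstoInMeasure_const (μ := μ) (l := l) (0 : Ω → E)
  rw [tendstoInMeasure_iff_dist] at *
  intro ε hε
  have hc' : 0 < ‖c‖ := norm_pos_iff.mpr hc
  convert hF (ε / ‖c‖) (by positivity) using 4 with i x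
  simp only [Pi.smul_apply, dist_smul₀, div_le_iff₀' hc']

variable [SeminormedAddCommGroup E] {F G : ι → Ω → E} {f g : Ω → E}

protected theorem add (hF : TendstoInMeasure μ F l f) (hG : TendstoInMeasure μ G l g) :
    TendstoInMeasure μ (fun i => F i + G i) l (f + g) := by
  rw [tendstoInMeasure_iff_dist] at *
  intro ε hε
  have hsum := (hF (ε / 2) (half_pos hε)).add (hG (ε / 2) (half_pos hε))
  rw [add_zero] at hsum
  refine tendsto_of_tendsto_of_tendsto_of_le_of_le tendsto_const_nhds hsum (fun _ => bot_le)
    fun i => ?_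
  have := measure_add_le_dist_le (μ := μ) (F i + G i) (f + G i) (f + g) (ε / 2) (ε / 2)
  simpa only [add_halves, Pi.add_apply, dist_add_right, dist_add_left] using this

protected theorem neg (hF : TendstoInMeasure μ F l f) :
    TendstoInMeasure μ (fun i => -F i) l (-f) := by
  simpa only [tendstoInMeasure_iff_dist, Pi.neg_apply, dist_neg_neg] using hF

protected theorem sub (hF : TendstoInMeasure μ F l f) (hG : TendstoInMeasure μ G l g) :
    TendstoInMeasure μ (fun i => F i - G i) l (f - g) := by
  simpa only [sub_eq_add_neg] using hF.add hG.neg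

end MeasureTheory.TendstoInMeasure

end TendstoInMeasure

def CondExpTendsto {Ω : Type*} {mΩ : MeasurableSpace Ω} (μ : Measure Ω)
    (A : ℕ → MeasurableSpace Ω) (g : Ω → ℝ) : Prop :=
  TendstoInMeasure μ (fun n => μ[g | A n]) atTop g

namespace CondExpTendsto

variable {Ω : Type*} {mΩ : MeasurableSpace Ω} {μ : Measure Ω} {A : ℕ → MeasurableSpace Ω}
  {f g : Ω → ℝ}

theorem congr_ae (hfg : f =ᵐ[μ] g) (hf : CondExpTendsto μ A f) : CondExpTendsto μ A g :=
  hf.congr' (Eventually.of_forall fun _ => condExp_congr_ae hfg) hfg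

theorem zero : CondExpTendsto μ A 0 := by
  simpa only [CondExpTendsto, condExp_zero] using tendstoInMeasure_const (μ := μ) 0

theorem add (hfi : Integrable f μ) (hgi : Integrable g μ) (hf : CondExpTendsto μ A f)
    (hg : CondExpTendsto μ A g) : CondExpTendsto μ A (f + g) :=
  (TendstoInMeasure.add hf hg).congr_left fun n => (condExp_add hfi hgi (A n)).symm

theorem sub (hfi : Integrable f μ) (hgi : Integrable g μ) (hf : CondExpTendsto μ A f)
    (hg : CondExpTendsto μ A g) : CondExpTendsto μ A (f - g) :=
  (TendstoInMeasure.sub hf hg).congr_left fun n => (condExp_sub hfi hgi (A n)).symm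

theorem const_smul (c : ℝ) (hf : CondExpTendsto μ A f) : CondExpTendsto μ A (c • f) :=
  (TendstoInMeasure.const_smul c hf).congr_left fun n => (condExp_smul c f (A n)).symm

theorem finsetSum {ι : Type*} {s : Finset ι} {f : ι → Ω → ℝ} (hfi : ∀ i ∈ s, Integrable (f i) μ)
    (hf : ∀ i ∈ s, CondExpTendsto μ A (f i)) : CondExpTendsto μ A (∑ i ∈ s, f i) := by
  classical
  induction s using Finset.induction_on with
  | empty => simpa using zero
  | insert i s hi ih =>
    rw [Finset.forall_mem_insert] at hfi hf
    rw [Finset.sum_insert hi]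
    exact add hfi.1 (integrable_finsetSum' s hfi.2) hf.1 (ih hfi.2 hf.2)

theorem of_forall_eLpNorm_sub_le (hg : Integrable g μ)
    (happrox : ∀ η : ℝ≥0∞, η ≠ 0 →
      ∃ h, Integrable h μ ∧ CondExpTendsto μ A h ∧ eLpNorm (g - h) 1 μ ≤ η) :
    CondExpTendsto μ A g := by
  rw [CondExpTendsto, tendstoInMeasure_iff_dist]
  intro ε hε
  rw [ENNReal.tendsto_atTop_zero]
  intro δ hδ
  have hε3 : 0 < ε / 3 := by positivity
  have hδ3 : δ / 3 ≠ 0 := by simpa using hδ.ne'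
  obtain ⟨h, hh, hhA, hgh⟩ := happrox (δ / 3 * ENNReal.ofReal (ε / 3)) (by simp [hδ3, hε3])
  obtain ⟨N, hN⟩ := ENNReal.tendsto_atTop_zero.mp (tendstoInMeasure_iff_dist.mp hhA (ε / 3) hε3)
    (δ / 3) (pos_iff_ne_zero.mpr hδ3)
  refine ⟨N, fun n hn => ?_⟩
  have hcond : μ {x | ε / 3 ≤ dist (μ[g | A n] x) (μ[h | A n] x)} ≤ δ / 3 := by
    refine measure_le_dist_le_of_eLpNorm_le
      (integrable_condExp.sub integrable_condExp).aestronglyMeasurable hε3 ?_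
    calc eLpNorm (μ[g | A n] - μ[h | A n]) 1 μ = eLpNorm (μ[g - h | A n]) 1 μ :=
          eLpNorm_congr_ae (condExp_sub hg hh _).symm
      _ ≤ eLpNorm (g - h) 1 μ := eLpNorm_condExp_le_eLpNorm _ le_rfl
      _ ≤ _ := hgh
  have hhg : μ {x | ε / 3 ≤ dist (h x) (g x)} ≤ δ / 3 :=
    measure_le_dist_le_of_eLpNorm_le (hh.sub hg).aestronglyMeasurable hε3
      (by rwa [← eLpNorm_neg, neg_sub])
  calc μ {x | ε ≤ dist (μ[g | A n] x) (g x)}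
      = μ {x | ε / 3 + ε / 3 + ε / 3 ≤ dist (μ[g | A n] x) (g x)} := by rw [add_thirds]
    _ ≤ μ {x | ε / 3 + ε / 3 ≤ dist (μ[g | A n] x) (h x)} + μ {x | ε / 3 ≤ dist (h x) (g x)} :=
      measure_add_le_dist_le _ _ _ _ _
    _ ≤ μ {x | ε / 3 ≤ dist (μ[g | A n] x) (μ[h | A n] x)} +
          μ {x | ε / 3 ≤ dist (μ[h | A n] x) (h x)} + μ {x | ε / 3 ≤ dist (h x) (g x)} := by
      gcongr; exact measure_add_le_dist_le _ _ _ _ _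
    _ ≤ δ / 3 + δ / 3 + δ / 3 := by gcongr; exact hN n hn
    _ = δ := ENNReal.add_thirds δ

theorem indicator_iUnion [IsFiniteMeasure μ] {f : ℕ → Set Ω}
    (hdisj : Pairwise fun i j => Disjoint (f i) (f j)) (hfm : ∀ i, MeasurableSet (f i))
    (hf : ∀ i, CondExpTendsto μ A ((f i).indicator fun _ => 1)) :
    CondExpTendsto μ A ((⋃ i, f i).indicator fun _ => 1) := by
  have hint : ∀ t, MeasurableSet t → Integrable (t.indicator fun _ => (1 : ℝ)) μ :=
    fun t ht => (integrable_const 1).indicator ht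
  have hpartial : ∀ k, CondExpTendsto μ A ((⋃ i ∈ Finset.range k, f i).indicator fun _ => 1) := by
    intro k
    rw [Finset.indicator_biUnion _ _ (hdisj.set_pairwise _)]
    simpa only [← Finset.sum_apply] using finsetSum (fun i _ => hint _ (hfm i)) fun i _ => hf i
  refine of_forall_eLpNorm_sub_le (hint _ (.iUnion hfm)) fun η hη => ?_
  obtain ⟨k, hk⟩ := ENNReal.tendsto_atTop_zero.mp
    (tendsto_measure_biUnion_Ici_zero_of_pairwise_disjoint (μ := μ)
      (fun i => (hfm i).nullMeasurableSet) hdisj) η (pos_iff_ne_zero.mpr hη)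
  have hUk : MeasurableSet (⋃ i ∈ Finset.range k, f i) :=
    Finset.measurableSet_biUnion _ fun i _ => hfm i
  refine ⟨_, hint _ hUk, hpartial k, ?_⟩
  have hsub : (⋃ i ∈ Finset.range k, f i) ⊆ ⋃ i, f i :=
    Set.iUnion₂_subset fun i _ => Set.subset_iUnion f i
  have htail : (⋃ i, f i) \ ⋃ i ∈ Finset.range k, f i ⊆ ⋃ i ≥ k, f i := by
    rintro x ⟨hx, hxk⟩
    obtain ⟨i, hi⟩ := Set.mem_iUnion.mp hx
    simp only [Set.mem_iUnion, Finset.mem_range, not_exists] at hxk ⊢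
    exact ⟨i, not_lt.mp fun hik => hxk i hik hi, hi⟩
  rw [← Set.indicator_sdiff hsub, eLpNorm_indicator_const ((MeasurableSet.iUnion hfm).diff hUk)
    one_ne_zero ENNReal.one_ne_top]
  simpa using (measure_mono htail).trans (hk k le_rfl)

theorem isClosed_setOf : IsClosed {f : Ω →₁[μ] ℝ | CondExpTendsto μ A f} := by
  refine isClosed_of_closure_subset fun g hg => ?_
  refine of_forall_eLpNorm_sub_le (L1.integrable_coeFn g) fun η hη => ?_
  obtain ⟨h, hh, hgh⟩ := EMetric.mem_closure_iff.mp hg η (pos_iff_ne_zero.mpr hη)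
  exact ⟨h, L1.integrable_coeFn h, hh, (Lp.edist_def g h ▸ hgh).le⟩

theorem of_weakConvSigma {Alim : MeasurableSpace Ω} (hle : Alim ≤ mΩ)
    (hW : WeakConvSigma μ A Alim) (hg : Integrable g μ) (hgm : AEStronglyMeasurable[Alim] g μ) :
    CondExpTendsto μ A g := by
  rw [← memLp_one_iff_integrable] at hg
  refine MemLp.induction_stronglyMeasurable hle ENNReal.one_ne_top (CondExpTendsto μ A)
    ?_ ?_ ?_ ?_ hg hgm
  · intro c s hs _
    have hc : s.indicator (fun _ => c) = c • s.indicator (fun _ => (1 : ℝ)) := by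
      ext x; by_cases hx : x ∈ s <;> simp [hx]
    exact hc ▸ const_smul c (hW s hs)
  · intro f g _ hf hg _ _ hfA hgA
    exact hfA.add (memLp_one_iff_integrable.mp hf) (memLp_one_iff_integrable.mp hg) hgA
  · exact isClosed_setOf.preimage continuous_subtype_val
  · intro f g hfg _ hf
    exact hf.congr_ae hfg

theorem comp_of_forall_boundedContinuous [IsFiniteMeasure μ] {E : Type*} [PseudoMetricSpace E]
    [MeasurableSpace E] [BorelSpace E] {Y : Ω → E} (hY : Measurable Y)
    (hA : ∀ f : E →ᵇ ℝ, CondExpTendsto μ A (f ∘ Y)) {φ : E → ℝ} (hφ : Integrable φ (μ.map Y)) :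
    CondExpTendsto μ A (φ ∘ Y) := by
  refine of_forall_eLpNorm_sub_le (hφ.comp_measurable hY) fun η hη => ?_
  obtain ⟨f, hφf, hf⟩ := (memLp_one_iff_integrable.mpr hφ).exists_boundedContinuous_eLpNorm_sub_le
    ENNReal.one_ne_top hη
  refine ⟨f ∘ Y, (memLp_one_iff_integrable.mp hf).comp_measurable hY, hA f, ?_⟩
  rw [eLpNorm_map_measure (hφ.sub (memLp_one_iff_integrable.mp hf)).aestronglyMeasurable
    hY.aemeasurable] at hφf
  exact hφf

end CondExpTendsto

theorem weakConvSigma_of_generateFrom {Ω : Type*} {m mΩ : MeasurableSpace Ω} {μ : Measure Ω}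
    [IsFiniteMeasure μ] {A : ℕ → MeasurableSpace Ω} {s : Set (Set Ω)}
    (hm : m ≤ mΩ) (hgen : m = MeasurableSpace.generateFrom s) (hs : IsPiSystem s)
    (h_one : CondExpTendsto μ A fun _ => 1)
    (h_s : ∀ t ∈ s, CondExpTendsto μ A (t.indicator fun _ => 1)) :
    WeakConvSigma μ A m := by
  refine MeasurableSpace.induction_on_inter
    (C := fun B _ => CondExpTendsto μ A (B.indicator fun _ => 1)) hgen hs ?_ h_s ?_ ?_
  · rw [Set.indicator_empty]
    exact CondExpTendsto.zero
  · intro t htm ht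
    rw [Set.indicator_compl]
    exact h_one.sub (integrable_const 1) ((integrable_const 1).indicator (hm t htm)) ht
  · intro f hdisj hfm hf
    exact CondExpTendsto.indicator_iUnion hdisj (fun i => hm _ (hfm i)) hf

section FiniteDimCylinders

variable {Ω ι β : Type*} [MeasurableSpace β]

def finiteDimCylinders (X : ι → Ω → β) (D : Set ι) : Set (Set Ω) :=
  {B | ∃ (k : ℕ) (t : Fin k → ι) (S : Set (Fin k → β)),
    (∀ i, t i ∈ D) ∧ MeasurableSet S ∧ B = (fun ω i => X (t i) ω) ⁻¹' S}

theorem isPiSystem_finiteDimCylinders (X : ι → Ω → β) (D : Set ι) :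
    IsPiSystem (finiteDimCylinders X D) := by
  rintro _ ⟨k₁, t₁, S₁, ht₁, hS₁, rfl⟩ _ ⟨k₂, t₂, S₂, ht₂, hS₂, rfl⟩ -
  refine ⟨k₁ + k₂, Fin.append t₁ t₂,
    (fun v i => v (Fin.castAdd k₂ i)) ⁻¹' S₁ ∩ (fun v j => v (Fin.natAdd k₁ j)) ⁻¹' S₂,
    Fin.addCases (by simpa using ht₁) (by simpa using ht₂), ?_, ?_⟩
  · exact ((measurable_pi_lambda _ fun i => measurable_pi_apply _) hS₁).inter
      ((measurable_pi_lambda _ fun j => measurable_pi_apply _) hS₂)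
  · ext ω
    simp only [Set.mem_inter_iff, Set.mem_preimage, Fin.append_left, Fin.append_right]

theorem measurable_pi_iSup_comap (X : ι → Ω → β) {D : Set ι} {k : ℕ} {t : Fin k → ι}
    (ht : ∀ i, t i ∈ D) :
    Measurable[⨆ s ∈ D, MeasurableSpace.comap (X s) ‹_›] fun ω i => X (t i) ω := by
  let _ : MeasurableSpace Ω := ⨆ s ∈ D, MeasurableSpace.comap (X s) ‹_›
  exact measurable_pi_lambda _ fun i => measurable_iff_comap_le.mpr
    (le_iSup₂ (f := fun s (_ : s ∈ D) => MeasurableSpace.comap (X s) ‹_›) (t i) (ht i))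

theorem iSup_comap_eq_generateFrom_finiteDimCylinders (X : ι → Ω → β) (D : Set ι) :
    ⨆ t ∈ D, MeasurableSpace.comap (X t) ‹_› =
      MeasurableSpace.generateFrom (finiteDimCylinders X D) := by
  refine le_antisymm (iSup₂_le fun t ht => ?_) (MeasurableSpace.generateFrom_le ?_)
  · rintro _ ⟨S, hS, rfl⟩
    exact MeasurableSpace.measurableSet_generateFrom
      ⟨1, fun _ => t, (fun v => v 0) ⁻¹' S, fun _ => ht, measurable_pi_apply 0 hS, rfl⟩
  · rintro _ ⟨k, t, S, ht, hS, rfl⟩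
    exact measurable_pi_iSup_comap X ht hS

end FiniteDimCylinders

theorem exists_seq_mem_tendsto_nhdsGT {D : Set ℝ} {a b t : ℝ} (hD : Set.Icc a b ⊆ closure D)
    (ht : t ∈ Set.Ico a b) : ∃ u : ℕ → ℝ, (∀ n, u n ∈ D) ∧ Tendsto u atTop (𝓝[>] t) := by
  have hsub : Set.Ioo t b ⊆ closure (Set.Ioo t b ∩ D) := fun x hx =>
    isOpen_Ioo.inter_closure ⟨hx, hD ⟨ht.1.trans hx.1.le, hx.2.le⟩⟩
  have hmem : t ∈ closure (Set.Ioo t b ∩ D) := by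
    have := closure_mono hsub
    rw [closure_closure, closure_Ioo ht.2.ne] at this
    exact this ⟨le_rfl, ht.2.le⟩
  obtain ⟨u, hu, hlim⟩ := mem_closure_iff_seq_limit.mp hmem
  exact ⟨u, fun n => (hu n).2,
    tendsto_nhdsWithin_iff.mpr ⟨hlim, Eventually.of_forall fun n => (hu n).1.1⟩⟩

theorem iSup_comap_Icc_eq_iSup_comap {Ω β : Type*} [TopologicalSpace β]
    [TopologicalSpace.PseudoMetrizableSpace β] [MeasurableSpace β] [BorelSpace β]
    {X : ℝ → Ω → β} {a b : ℝ} {D : Set ℝ}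
    (hright : ∀ ω, ∀ t ∈ Set.Ico a b, Tendsto (fun s => X s ω) (𝓝[>] t) (𝓝 (X t ω)))
    (hD : D ⊆ Set.Icc a b) (hdense : Set.Icc a b ⊆ closure D) (hbD : b ∈ D) :
    ⨆ t ∈ Set.Icc a b, MeasurableSpace.comap (X t) ‹_› =
      ⨆ t ∈ D, MeasurableSpace.comap (X t) ‹_› := by
  refine le_antisymm (iSup₂_le fun t ht => ?_) (iSup₂_mono' fun t ht => ⟨t, hD ht, le_rfl⟩)
  set mD := ⨆ t ∈ D, MeasurableSpace.comap (X t) ‹_›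
  have hmeasD : ∀ d ∈ D, Measurable[mD] (X d) := fun d hd =>
    measurable_iff_comap_le.mpr (le_iSup₂ (f := fun s (_ : s ∈ D) =>
      MeasurableSpace.comap (X s) ‹_›) d hd)
  refine measurable_iff_comap_le.mp ?_
  rcases eq_or_lt_of_le ht.2 with rfl | htb
  · exact hmeasD t hbD
  · obtain ⟨u, huD, hu⟩ := exists_seq_mem_tendsto_nhdsGT hdense ⟨ht.1, htb⟩
    exact measurable_of_tendsto_metrizable (fun n => hmeasD _ (huD n))
      (tendsto_pi_nhds.mpr fun ω => (hright ω t ⟨ht.1, htb⟩).comp hu)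

theorem weakConvSigma_iff_finiteDimensional_general
    {Ω : Type*} {H : MeasurableSpace Ω} (μ : Measure Ω) [IsProbabilityMeasure μ]
    (T : ℝ) (X : ℝ → Ω → ℝ)
    (hXmeas : ∀ t, Measurable (X t))
    (hXcadlag : ∀ ω, IsCadlagOn T (fun t => X t ω))
    (D : Set ℝ) (hD : D ⊆ Set.Icc 0 T) (hDdense : Set.Icc 0 T ⊆ closure D)
    (hTD : T ∈ D)
    (A : ℕ → MeasurableSpace Ω) :
    WeakConvSigma μ A (⨆ t ∈ Set.Icc (0:ℝ) T, MeasurableSpace.comap (X t) inferInstance) ↔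
      ∀ (k : ℕ) (t : Fin k → ℝ), (∀ i, t i ∈ D) →
        ∀ f : (Fin k → ℝ) → ℝ, Continuous f → (∃ C : ℝ, ∀ x, |f x| ≤ C) →
          TendstoInMeasure μ
            (fun n => μ[fun ω => f (fun i => X (t i) ω) | A n]) atTop
            (fun ω => f (fun i => X (t i) ω)) := by
  have hGH : (⨆ t ∈ Set.Icc (0:ℝ) T, MeasurableSpace.comap (X t) inferInstance) ≤ H :=
    iSup₂_le fun t _ => (hXmeas t).comap_le
  have hGD := iSup_comap_Icc_eq_iSup_comap (fun ω => (hXcadlag ω).1) hD hDdense hTD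
  constructor
  · rintro hW k t ht f hf ⟨C, hC⟩
    have hfY := hf.measurable.comp (measurable_pi_iSup_comap X fun i => hD (ht i))
    exact CondExpTendsto.of_weakConvSigma hGH hW
      (.of_bound (hfY.mono hGH le_rfl).aestronglyMeasurable C (.of_forall fun ω => hC _))
      hfY.aestronglyMeasurable
  · intro hfd
    refine weakConvSigma_of_generateFrom hGH
      (hGD.trans (iSup_comap_eq_generateFrom_finiteDimCylinders X D))
      (isPiSystem_finiteDimCylinders X D)
      (hfd 0 Fin.elim0 (fun i => i.elim0) (fun _ => 1) continuous_const ⟨1, fun _ => by simp⟩) ?_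
    rintro _ ⟨k, t, S, ht, hS, rfl⟩
    have hind : ((fun ω i => X (t i) ω) ⁻¹' S).indicator (fun _ => (1 : ℝ)) =
        (S.indicator fun _ => 1) ∘ fun ω i => X (t i) ω :=
      funext fun _ => Set.indicator_comp_right (g := fun _ => (1 : ℝ)) _
    rw [hind]
    refine CondExpTendsto.comp_of_forall_boundedContinuous
      (measurable_pi_lambda _ fun i => hXmeas (t i))
      (fun f => hfd k t ht f f.continuous ⟨‖f‖, fun x => ?_⟩) ((integrable_const 1).indicator hS)
    simpa only [Real.norm_eq_abs] using f.norm_coe_le_norm x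

/-- Characterization of weak convergence of σ-algebras towards the σ-algebra generated
by a càdlàg process `X` on `[0,T]`: `A n` converges weakly to `σ(X_t, 0 ≤ t ≤ T)` iff
for every finite collection of times in a dense subset `D` of `[0,T]` containing `T`
and every bounded continuous function `f`, the conditional expectations
`E(f(X_{t_1},…,X_{t_k}) | A n)` converge in probability to `f(X_{t_1},…,X_{t_k})`. -/
theorem weakConvSigma_iff_finiteDimensional
    {Ω : Type*} {H : MeasurableSpace Ω} (μ : Measure Ω) [IsProbabilityMeasure μ]
    (T : ℝ) (hT : 0 < T) (X : ℝ → Ω → ℝ)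
    (hXmeas : ∀ t, Measurable (X t))
    (hXcadlag : ∀ ω, IsCadlagOn T (fun t => X t ω))
    (D : Set ℝ) (hD : D ⊆ Set.Icc 0 T) (hDdense : Set.Icc 0 T ⊆ closure D)
    (hTD : T ∈ D)
    (A : ℕ → MeasurableSpace Ω) :
    WeakConvSigma μ A (⨆ t ∈ Set.Icc (0:ℝ) T, MeasurableSpace.comap (X t) inferInstance) ↔
      ∀ (k : ℕ) (t : Fin k → ℝ), (∀ i, t i ∈ D) →
        ∀ f : (Fin k → ℝ) → ℝ, Continuous f → (∃ C : ℝ, ∀ x, |f x| ≤ C) →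
          TendstoInMeasure μ
            (fun n => μ[fun ω => f (fun i => X (t i) ω) | A n]) atTop
            (fun ω => f (fun i => X (t i) ω)) :=
  weakConvSigma_iff_finiteDimensional_general (H := H) μ T X hXmeas hXcadlag D hD hDdense hTD A
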